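/- For every integer r ≥ 2 there exists a finite simple graph G such that χ(G) = r, G has no additive coloring over any finite abelian group of order r, and yet G has an additive coloring over the cyclic group ℤ_{r+1}. -/

import Mathlib

/-- The sum of the values of `f` over the neighborhood of `u` in `G`. -/
noncomputable def nsum {V : Type*} [Fintype V] {M : Type*} [AddCommMonoid M]
    (G : SimpleGraph V) (f : V → M) (u : V) : M :=
  letI := Classical.decRel G.Adj
  ∑ x ∈ G.neighborFinset u, f x

/-- `f` is an additive coloring of `G` with values in the abelian group `M`:
adjacent vertices have different neighborhood sums. -/
def IsAddColoring {V : Type*} [Fintype V] {M : Type*} [AddCommMonoid M]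
    (G : SimpleGraph V) (f : V → M) : Prop :=
  ∀ ⦃u v : V⦄, G.Adj u v → nsum G f u ≠ nsum G f v

/-!
The graph consists of two copies of `K_{r+1}` minus an edge `{hub, w}`, each hub carrying a pendant
vertex, with the two hubs adjacent and the two pendants adjacent; a clique of a copy and the
coloring by indices mod `r` show that its chromatic number is `r`.

The neighborhood sums of an additive coloring form a proper coloring, so over a group of order
`r` two of the `r + 1` vertices of a copy get the same sum, and these must be the non-adjacent
`hub` and `w`. The neighborhood of the hub is that of `w` together with the other hub and its own
pendant, so these two values add up to zero. Doing this in both copies shows that both pendants,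
whose neighborhoods are their hub and the other pendant, have neighborhood sum zero, although
they are adjacent. Over `ℤ_{r+1}` a copy has room for `r + 1` distinct sums, and an explicit
coloring works.
-/

open Finset SimpleGraph

section General

variable {V W M : Type*} [Fintype V] [Fintype W]

lemma nsum_eq_sum_neighborFinset [AddCommMonoid M] (G : SimpleGraph V) [DecidableRel G.Adj]
    (f : V → M) (u : V) : nsum G f u = ∑ x ∈ G.neighborFinset u, f x := by
  unfold nsum
  congr!

lemma nsum_comp_iso [AddCommMonoid M] {G : SimpleGraph V} {G' : SimpleGraph W} (e : G ≃g G')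
    (f : W → M) (v : V) : nsum G (f ∘ e) v = nsum G' f (e v) := by
  classical
  rw [nsum_eq_sum_neighborFinset, nsum_eq_sum_neighborFinset]
  exact sum_equiv e.toEquiv (fun _ => by simp [e.map_adj_iff]) (by simp)

lemma isAddColoring_comp_iso [AddCommMonoid M] {G : SimpleGraph V} {G' : SimpleGraph W}
    (e : G ≃g G') (f : W → M) : IsAddColoring G (f ∘ e) ↔ IsAddColoring G' f := by
  refine ⟨fun hf u v huv => ?_, fun hf u v huv => ?_⟩
  · simpa [nsum_comp_iso] using hf (e.symm.map_adj_iff.2 huv)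
  · simpa [nsum_comp_iso] using hf (e.map_adj_iff.2 huv)

end General

lemma sum_fin_natCast_add_self (n : ℕ) :
    ∑ i : Fin n, ((i : ℕ) : ZMod n) + ∑ i : Fin n, ((i : ℕ) : ZMod n) = 0 := by
  rw [← Nat.cast_sum, ← Nat.cast_add, ← mul_two, Fin.sum_univ_eq_sum_range (fun i => i),
    sum_range_id_mul_two, Nat.cast_mul, ZMod.natCast_self, zero_mul]

/-- Two copies `s : Bool` of `K_{r+1}` minus the edge `{0, last}`, each with a pendant vertex
`(s, none)` at its hub `(s, some 0)`; the two hubs are adjacent, and so are the two pendants. -/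
def nearCliquePair (r : ℕ) : SimpleGraph (Bool × Option (Fin (r + 1))) where
  Adj
    | (s, some i), (t, some j) =>
      s = t ∧ i ≠ j ∧ s(i, j) ≠ s(0, Fin.last r) ∨ s ≠ t ∧ i = 0 ∧ j = 0
    | (s, some i), (t, none) | (t, none), (s, some i) => s = t ∧ i = 0
    | (s, none), (t, none) => s ≠ t
  symm := ⟨by rintro ⟨s, _ | i⟩ ⟨t, _ | j⟩ h <;> simp_all <;> tauto⟩
  loopless := ⟨by rintro ⟨s, _ | i⟩ h <;> simp_all⟩

section NearCliquePair

variable {r : ℕ} {s t : Bool} {i j : Fin (r + 1)}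

@[simp] lemma nearCliquePair_adj_some_some :
    (nearCliquePair r).Adj (s, some i) (t, some j) ↔
      s = t ∧ i ≠ j ∧ s(i, j) ≠ s(0, Fin.last r) ∨ s ≠ t ∧ i = 0 ∧ j = 0 := Iff.rfl

@[simp] lemma nearCliquePair_adj_some_none :
    (nearCliquePair r).Adj (s, some i) (t, none) ↔ s = t ∧ i = 0 := Iff.rfl

@[simp] lemma nearCliquePair_adj_none_some :
    (nearCliquePair r).Adj (s, none) (t, some j) ↔ t = s ∧ j = 0 := Iff.rfl

@[simp] lemma nearCliquePair_adj_none_none :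
    (nearCliquePair r).Adj (s, none) (t, none) ↔ s ≠ t := Iff.rfl

noncomputable instance : DecidableRel (nearCliquePair r).Adj := Classical.decRel _

lemma nearCliquePair_neighborFinset_some (hi0 : i ≠ 0) (hil : i ≠ Fin.last r) :
    (nearCliquePair r).neighborFinset (s, some i) = (univ.erase i).image fun j => (s, some j) := by
  ext ⟨t, _ | j⟩ <;> simp [hi0, hil, eq_comm, and_comm]

lemma nearCliquePair_neighborFinset_last (hr : r ≠ 0) :
    (nearCliquePair r).neighborFinset (s, some (Fin.last r)) =
      ((univ.erase (Fin.last r)).erase 0).image fun j => (s, some j) := by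
  ext ⟨t, _ | j⟩ <;> simp [hr, eq_comm]
  tauto

lemma nearCliquePair_neighborFinset_zero (hr : r ≠ 0) :
    (nearCliquePair r).neighborFinset (s, some 0) =
      insert (!s, some 0)
        (insert (s, none) ((nearCliquePair r).neighborFinset (s, some (Fin.last r)))) := by
  ext ⟨t, _ | j⟩ <;> simp [hr, eq_comm, Bool.eq_not_iff]
  tauto

lemma nearCliquePair_neighborFinset_none :
    (nearCliquePair r).neighborFinset (s, none) = {(s, some 0), (!s, none)} := by
  ext ⟨t, _ | j⟩ <;> simp [eq_comm, Bool.eq_not_iff]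

section Sums

variable {M : Type*} (f : Bool × Option (Fin (r + 1)) → M)

lemma nsum_nearCliquePair_some [AddCommGroup M] (hi0 : i ≠ 0) (hil : i ≠ Fin.last r) :
    nsum (nearCliquePair r) f (s, some i) = ∑ j, f (s, some j) - f (s, some i) := by
  rw [nsum_eq_sum_neighborFinset, nearCliquePair_neighborFinset_some hi0 hil,
    sum_image (by simp), sum_erase_eq_sub (mem_univ _)]

lemma nsum_nearCliquePair_last [AddCommGroup M] (hr : r ≠ 0) :
    nsum (nearCliquePair r) f (s, some (Fin.last r)) =
      ∑ j, f (s, some j) - f (s, some (Fin.last r)) - f (s, some 0) := by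
  rw [nsum_eq_sum_neighborFinset, nearCliquePair_neighborFinset_last hr, sum_image (by simp),
    sum_erase_eq_sub (by simp [Fin.ext_iff, hr.symm]), sum_erase_eq_sub (mem_univ _)]

lemma nsum_nearCliquePair_zero [AddCommMonoid M] (hr : r ≠ 0) :
    nsum (nearCliquePair r) f (s, some 0) =
      f (!s, some 0) + f (s, none) + nsum (nearCliquePair r) f (s, some (Fin.last r)) := by
  rw [nsum_eq_sum_neighborFinset, nsum_eq_sum_neighborFinset,
    nearCliquePair_neighborFinset_zero hr, sum_insert (by simp [hr]), sum_insert (by simp [hr]),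
    add_assoc]

lemma nsum_nearCliquePair_none [AddCommMonoid M] :
    nsum (nearCliquePair r) f (s, none) = f (s, some 0) + f (!s, none) := by
  rw [nsum_eq_sum_neighborFinset, nearCliquePair_neighborFinset_none, sum_pair (by simp)]

end Sums

theorem nsum_nearCliquePair_zero_eq_last {Γ : Type*} [AddCommGroup Γ] [Fintype Γ]
    (hΓ : Fintype.card Γ ≤ r) {f : Bool × Option (Fin (r + 1)) → Γ}
    (hf : IsAddColoring (nearCliquePair r) f) (s : Bool) :
    nsum (nearCliquePair r) f (s, some 0) = nsum (nearCliquePair r) f (s, some (Fin.last r)) := by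
  obtain ⟨i, j, hij, hS⟩ := Fintype.exists_ne_map_eq_of_card_lt
    (fun i => nsum (nearCliquePair r) f (s, some i)) (by simpa [Nat.lt_succ_iff] using hΓ)
  have hij' : s(i, j) = s(0, Fin.last r) := by
    by_contra h
    exact hf (by simp [hij, h]) hS
  rcases Sym2.eq_iff.1 hij' with ⟨rfl, rfl⟩ | ⟨rfl, rfl⟩
  · exact hS
  · exact hS.symm

theorem not_isAddColoring_nearCliquePair {Γ : Type*} [AddCommGroup Γ] [Fintype Γ]
    (hΓ : Fintype.card Γ ≤ r) (f : Bool × Option (Fin (r + 1)) → Γ) :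
    ¬IsAddColoring (nearCliquePair r) f := by
  intro hf
  have hr : r ≠ 0 := (Fintype.card_pos.trans_le hΓ).ne'
  have hub_pendant (s : Bool) : f (!s, some 0) + f (s, none) = 0 := by
    simpa [nsum_nearCliquePair_zero f hr] using nsum_nearCliquePair_zero_eq_last hΓ hf s
  apply hf (show (nearCliquePair r).Adj (false, none) (true, none) by simp)
  rw [nsum_nearCliquePair_none, nsum_nearCliquePair_none]
  simpa using (hub_pendant true).trans (hub_pendant false).symm

lemma Fin.eq_or_eq_zero_last_of_natCast_eq {r : ℕ} {i j : Fin (r + 1)}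
    (h : ((i : ℕ) : ZMod r) = ((j : ℕ) : ZMod r)) : i = j ∨ s(i, j) = s(0, Fin.last r) := by
  rw [ZMod.natCast_eq_natCast_iff'] at h
  induction i using Fin.lastCases <;> induction j using Fin.lastCases <;>
    simp_all [Nat.mod_eq_of_lt, Fin.ext_iff]

lemma colorable_nearCliquePair (hr : 2 ≤ r) : (nearCliquePair r).Colorable r := by
  have : NeZero r := ⟨by omega⟩
  have h10 : (1 : ZMod r) ≠ 0 := by
    have : Fact (1 < r) := ⟨hr⟩
    exact one_ne_zero
  let C : (nearCliquePair r).Coloring (ZMod r) := Coloring.mk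
    (fun | (s, some i) => (i : ℕ) + cond s 1 0 | (s, none) => cond s 0 1) (by
      rintro ⟨s, _ | i⟩ ⟨t, _ | j⟩ h
      · cases s <;> cases t <;> simp_all [h10.symm]
      · obtain ⟨rfl, rfl⟩ := h
        cases t <;> simp [h10, h10.symm]
      · obtain ⟨rfl, rfl⟩ := h
        cases s <;> simp [h10, h10.symm]
      · rcases h with ⟨rfl, hij, hedge⟩ | ⟨hst, rfl, rfl⟩
        · simpa using fun hc => (Fin.eq_or_eq_zero_last_of_natCast_eq hc).elim hij hedge
        · cases s <;> cases t <;> simp_all [h10.symm])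
  simpa using C.colorable

theorem chromaticNumber_nearCliquePair (hr : 2 ≤ r) : (nearCliquePair r).chromaticNumber = r := by
  refine le_antisymm (colorable_nearCliquePair hr).chromaticNumber_le ?_
  let φ : (⊤ : SimpleGraph (Fin r)) →g nearCliquePair r :=
    ⟨fun j => (false, some j.castSucc), fun h => by simpa using h⟩
  simpa using chromaticNumber_mono_of_hom φ

-- Chosen so that only `σ + σ = 0` is needed about `σ = ∑ j, (j : ZMod (r + 1))`, whose value
-- depends on the parity of `r`.
def zmodColoring (r : ℕ) : Bool × Option (Fin (r + 1)) → ZMod (r + 1)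
  | (false, some i) => (i : ℕ)
  | (true, some i) => if i = 0 then 0 else 1 - (i : ℕ)
  | (false, none) => -1
  | (true, none) => 1

lemma sum_zmodColoring_true :
    ∑ i, zmodColoring r (true, some i) =
      -1 - ∑ i : Fin (r + 1), ((i : ℕ) : ZMod (r + 1)) := by
  calc ∑ i, zmodColoring r (true, some i)
      = ∑ i ∈ (univ : Finset (Fin (r + 1))).erase 0, (1 - ((i : ℕ) : ZMod (r + 1))) := by
        rw [← sum_erase univ (a := 0) rfl]
        exact sum_congr rfl fun i hi => if_neg (ne_of_mem_erase hi)
    _ = _ := by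
        rw [sum_erase_eq_sub (mem_univ _), sum_sub_distrib]
        simp only [sum_const, card_univ, Fintype.card_fin, nsmul_eq_mul, CharP.cast_eq_zero,
          mul_one, zero_sub, Fin.val_zero, Nat.cast_zero, sub_zero]
        ring

lemma nsum_zmodColoring_false (hr : r ≠ 0) (i : Fin (r + 1)) :
    nsum (nearCliquePair r) (zmodColoring r) (false, some i) =
      ∑ j : Fin (r + 1), ((j : ℕ) : ZMod (r + 1)) - (i : ℕ) := by
  have hlast := nsum_nearCliquePair_last (s := false) (zmodColoring r) hr
  rcases eq_or_ne i 0 with rfl | hi0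
  · rw [nsum_nearCliquePair_zero _ hr, hlast]
    simp only [zmodColoring, Bool.not_false, ↓reduceIte, zero_add, Fin.val_last, Fin.val_zero,
      Nat.cast_zero, sub_zero]
    linear_combination -ZMod.natCast_self' r
  rcases eq_or_ne i (Fin.last r) with rfl | hil
  · rw [hlast]
    simp [zmodColoring]
  · rw [nsum_nearCliquePair_some _ hi0 hil]
    rfl

lemma nsum_zmodColoring_true (hr : r ≠ 0) (i : Fin (r + 1)) :
    nsum (nearCliquePair r) (zmodColoring r) (true, some i) =
      ∑ j : Fin (r + 1), ((j : ℕ) : ZMod (r + 1)) + (i : ℕ) - 2 := by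
  have hσ := sum_fin_natCast_add_self (r + 1)
  have hlast := nsum_nearCliquePair_last (s := true) (zmodColoring r) hr
  rcases eq_or_ne i 0 with rfl | hi0
  · rw [nsum_nearCliquePair_zero _ hr, hlast, sum_zmodColoring_true]
    simp only [zmodColoring, Bool.not_true, Fin.val_zero, Nat.cast_zero, zero_add,
      Fin.last_eq_zero_iff, hr, ↓reduceIte, Fin.val_last, sub_zero, add_zero]
    linear_combination -hσ + ZMod.natCast_self' r
  rcases eq_or_ne i (Fin.last r) with rfl | hil
  · rw [hlast, sum_zmodColoring_true]
    simp only [zmodColoring, Fin.last_eq_zero_iff, hr, ↓reduceIte, Fin.val_last, sub_zero]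
    linear_combination -hσ
  · rw [nsum_nearCliquePair_some _ hi0 hil, sum_zmodColoring_true]
    simp only [zmodColoring, hi0, ↓reduceIte]
    linear_combination -hσ

theorem isAddColoring_zmodColoring (hr : 2 ≤ r) :
    IsAddColoring (nearCliquePair r) (zmodColoring r) := by
  have hr0 : r ≠ 0 := by omega
  have h2 : (2 : ZMod (r + 1)) ≠ 0 := by
    exact_mod_cast (ZMod.natCast_eq_zero_iff 2 (r + 1)).not.2
      (Nat.not_dvd_of_pos_of_lt two_pos (by omega))
  have hcast : Function.Injective fun i : Fin (r + 1) => ((i : ℕ) : ZMod (r + 1)) := by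
    intro i j h
    simpa [ZMod.natCast_eq_natCast_iff', Nat.mod_eq_of_lt i.isLt, Nat.mod_eq_of_lt j.isLt,
      Fin.ext_iff] using h
  obtain ⟨σ, hσ⟩ : ∃ σ, ∑ j : Fin (r + 1), ((j : ℕ) : ZMod (r + 1)) = σ :=
    ⟨_, rfl⟩
  have hσ1 : σ ≠ 1 := fun h =>
    h2 (by rw [← one_add_one_eq_two, ← h, ← hσ, sum_fin_natCast_add_self])
  have hubs : σ ≠ σ - 2 := fun h => h2 (by linear_combination h)
  have hub_pendant : σ - 2 ≠ -1 := fun h => hσ1 (by linear_combination h)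
  have pendants : (1 : ZMod (r + 1)) ≠ -1 := fun h => h2 (by linear_combination h)
  rintro ⟨s, _ | i⟩ ⟨t, _ | j⟩ h
  case some.some =>
    rcases h with ⟨rfl, hij, -⟩ | ⟨hst, rfl, rfl⟩
    · cases s <;>
        simpa [nsum_zmodColoring_false hr0, nsum_zmodColoring_true hr0] using hcast.ne hij
    · cases s <;> cases t <;>
        simp_all [nsum_zmodColoring_false hr0, nsum_zmodColoring_true hr0, hubs.symm]
  all_goals
    cases s <;> cases t <;> simp_all [nsum_nearCliquePair_none, zmodColoring,
      nsum_zmodColoring_false hr0, nsum_zmodColoring_true hr0, hσ1.symm, hub_pendant.symm,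
      pendants.symm]

/-- For every `r ≥ 2` there is a finite simple graph `G` with chromatic number `r`
that has no additive coloring over any finite abelian group of order `r`, but has an
additive coloring over `ℤ_{r+1}`. -/
theorem exists_graph_no_additive_coloring_over_groups_of_order_chi
    (r : ℕ) (hr : 2 ≤ r) :
    ∃ (n : ℕ) (G : SimpleGraph (Fin n)),
      G.chromaticNumber = r ∧
      (∀ (Γ : Type) [AddCommGroup Γ] [Fintype Γ], Fintype.card Γ = r →
        ¬∃ f : Fin n → Γ, IsAddColoring G f) ∧
      (∃ f : Fin n → ZMod (r + 1), IsAddColoring G f) := by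
  let e := (nearCliquePair r).overFinIso rfl
  refine ⟨_, (nearCliquePair r).overFin rfl, ?_, ?_, ?_⟩
  · rw [← chromaticNumber_congr e, chromaticNumber_nearCliquePair hr]
  · rintro Γ _ _ hΓ ⟨f, hf⟩
    exact not_isAddColoring_nearCliquePair hΓ.le (f ∘ e) ((isAddColoring_comp_iso e f).2 hf)
  · exact ⟨zmodColoring r ∘ e.symm,
      (isAddColoring_comp_iso e.symm _).2 (isAddColoring_zmodColoring hr)⟩
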